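/- In any swap equilibrium of a 2-type Swap Schelling Game on a cycle with at least two agents of each color, every agent has strictly positive utility; equivalently, every maximal monochromatic arc of the induced coloring has length at least 2. -/

import Mathlib

open SimpleGraph Finset
open scoped Classical

noncomputable def ssgUtil {V A : Type*} [Fintype V] [DecidableEq V]
    (G : SimpleGraph V) [DecidableRel G.Adj]
    {k : ℕ} (c : A → Fin k) (σ : A ≃ V) (i : A) : ℚ :=
  (((G.neighborFinset (σ i)).filter (fun v => c (σ.symm v) = c i)).card : ℚ) /
    (G.degree (σ i) : ℚ)

def ssgSwap {V A : Type*} [DecidableEq V] (σ : A ≃ V) (i j : A) : A ≃ V :=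
  σ.trans (Equiv.swap (σ i) (σ j))

def ssgProfitable {V A : Type*} [Fintype V] [DecidableEq V]
    (G : SimpleGraph V) [DecidableRel G.Adj]
    {k : ℕ} (c : A → Fin k) (σ : A ≃ V) (i j : A) : Prop :=
  c i ≠ c j ∧
    ssgUtil G c σ i < ssgUtil G c (ssgSwap σ i j) i ∧
    ssgUtil G c σ j < ssgUtil G c (ssgSwap σ i j) j

def ssgEquilibrium {V A : Type*} [Fintype V] [DecidableEq V]
    (G : SimpleGraph V) [DecidableRel G.Adj]
    {k : ℕ} (c : A → Fin k) (σ : A ≃ V) : Prop :=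
  ∀ i j : A, ¬ ssgProfitable G c σ i j

def ssgLocalEquilibrium {V A : Type*} [Fintype V] [DecidableEq V]
    (G : SimpleGraph V) [DecidableRel G.Adj]
    {k : ℕ} (c : A → Fin k) (σ : A ≃ V) : Prop :=
  ∀ i j : A, G.Adj (σ i) (σ j) → ¬ ssgProfitable G c σ i j

noncomputable def ssgWelfare {V A : Type*} [Fintype V] [DecidableEq V] [Fintype A]
    (G : SimpleGraph V) [DecidableRel G.Adj]
    {k : ℕ} (c : A → Fin k) (σ : A ≃ V) : ℚ :=
  ∑ i : A, ssgUtil G c σ i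

noncomputable def ssgPhi {V A : Type*} [Fintype V] [DecidableEq V]
    (G : SimpleGraph V) [DecidableRel G.Adj]
    {k : ℕ} (c : A → Fin k) (σ : A ≃ V) : ℕ :=
  (G.edgeFinset.filter (fun e => ∀ u ∈ e, ∀ v ∈ e, c (σ.symm u) = c (σ.symm v))).card


noncomputable instance (n : ℕ) : DecidableRel (SimpleGraph.cycleGraph n).Adj :=
  Classical.decRel _

/-! If agent `i`, at vertex `s`, had utility `0`, both neighbours of `s` would carry the other
colour. Walking around the cycle from a second agent of `i`'s colour while avoiding `s`, one
reaches a vertex `x` of `i`'s colour whose successor `y = x + 1` carries the other colour, and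
`y ≠ s`. Swapping `i` with the agent `j` at `y` is then profitable: `i` gains the neighbour `x`,
and `j`, who had the differently coloured neighbour `x`, moves to `s`, all of whose neighbours
have `j`'s colour except `y` itself when `y = s - 1`; in that case `j` had utility `0` before. -/

open Fin.NatCast in
theorem Fin.exists_and_not_add_one {n : ℕ} [NeZero n] {P : Fin n → Prop} {x y : Fin n}
    (hx : P x) (hy : ¬ P y) : ∃ z, P z ∧ ¬ P (z + 1) := by
  by_contra! hclosed
  have hreach : ∀ k : ℕ, P (x + (k : Fin n)) := by
    intro k
    induction k with
    | zero => simpa using hx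
    | succ k ih => simpa [Nat.cast_succ, ← add_assoc] using hclosed _ ih
  exact hy (by simpa using hreach (y - x).val)

lemma Fin.eq_of_ne_of_ne {p q r : Fin 2} (hp : p ≠ r) (hq : q ≠ r) : p = q := by
  omega

lemma cycleGraph_adj_iff {n : ℕ} {u v : Fin (n + 2)} :
    (cycleGraph (n + 2)).Adj u v ↔ v = u - 1 ∨ v = u + 1 := by
  rw [← mem_neighborSet, cycleGraph_neighborSet]; rfl

lemma Fin.add_one_ne_sub_one {n : ℕ} (v : Fin (n + 3)) : v + 1 ≠ v - 1 := by
  intro h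
  have hdeg := cycleGraph_degree_three_le (v := v)
  rw [cycleGraph_degree_two_le, h] at hdeg
  simp at hdeg

section Swap

variable {V A : Type*} [DecidableEq V] {σ : A ≃ V} {i j : A}

lemma ssgSwap_apply_left : ssgSwap σ i j i = σ j := by
  simp [ssgSwap]

lemma ssgSwap_comm : ssgSwap σ i j = ssgSwap σ j i := by
  rw [ssgSwap, ssgSwap, Equiv.swap_comm]

lemma ssgSwap_symm_apply_of_ne {v : V} (hi : v ≠ σ i) (hj : v ≠ σ j) :
    (ssgSwap σ i j).symm v = σ.symm v := by
  simp [ssgSwap, Equiv.swap_apply_of_ne_of_ne hi hj]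

end Swap

section Utility

variable {V A : Type*} [Fintype V] [DecidableEq V] {G : SimpleGraph V} [DecidableRel G.Adj]
  {k : ℕ} {c : A → Fin k} {σ : A ≃ V} {i j : A}

lemma ssgUtil_pos_iff : 0 < ssgUtil G c σ i ↔ ∃ v, G.Adj (σ i) v ∧ c (σ.symm v) = c i := by
  have hdeg : #{v ∈ G.neighborFinset (σ i) | c (σ.symm v) = c i} ≤ G.degree (σ i) :=
    card_filter_le _ _
  rw [ssgUtil, div_pos_iff, or_iff_left fun h => (Nat.cast_nonneg _).not_gt h.1, Nat.cast_pos,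
    Nat.cast_pos, and_iff_left_of_imp fun h => h.trans_le hdeg, card_pos, filter_nonempty_iff]
  simp only [mem_neighborFinset]

lemma ssgUtil_lt_one {v : V} (hv : G.Adj (σ i) v) (hc : c (σ.symm v) ≠ c i) :
    ssgUtil G c σ i < 1 := by
  have hdeg : 0 < G.degree (σ i) := G.degree_pos_iff_exists_adj _ |>.2 ⟨v, hv⟩
  rw [ssgUtil, div_lt_one (by exact_mod_cast hdeg), Nat.cast_lt]
  exact card_lt_card (filter_ssubset.2 ⟨v, (G.mem_neighborFinset _ _).2 hv, hc⟩)

lemma ssgUtil_eq_one {v : V} (hv : G.Adj (σ i) v)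
    (hc : ∀ w, G.Adj (σ i) w → c (σ.symm w) = c i) : ssgUtil G c σ i = 1 := by
  have hdeg : 0 < G.degree (σ i) := G.degree_pos_iff_exists_adj _ |>.2 ⟨v, hv⟩
  rw [ssgUtil, filter_true_of_mem fun w hw => hc w ((G.mem_neighborFinset _ _).1 hw),
    card_neighborFinset_eq_degree, div_self (by exact_mod_cast hdeg.ne')]

lemma ssgUtil_ssgSwap_pos {v : V} (hv : G.Adj (σ j) v) (hvi : v ≠ σ i)
    (hc : c (σ.symm v) = c i) : 0 < ssgUtil G c (ssgSwap σ i j) i :=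
  ssgUtil_pos_iff.2
    ⟨v, by rwa [ssgSwap_apply_left], by rwa [ssgSwap_symm_apply_of_ne hvi hv.ne']⟩

lemma ssgUtil_ssgSwap_eq_one {v : V} (hv : G.Adj (σ j) v)
    (hc : ∀ w, G.Adj (σ j) w → w ≠ σ i ∧ c (σ.symm w) = c i) :
    ssgUtil G c (ssgSwap σ i j) i = 1 := by
  refine ssgUtil_eq_one (v := v) (by rwa [ssgSwap_apply_left]) fun w hw => ?_
  rw [ssgSwap_apply_left] at hw
  rw [ssgSwap_symm_apply_of_ne (hc w hw).1 hw.ne']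
  exact (hc w hw).2

end Utility

section Cycle

variable {A : Type*} {m : ℕ} {c : A → Fin 2} {σ : A ≃ Fin (m + 3)} {i j : A}

lemma ssgUtil_lt_ssgUtil_ssgSwap_of_lonely {x : Fin (m + 3)}
    (hlonely : ∀ v, (cycleGraph (m + 3)).Adj (σ i) v → c (σ.symm v) ≠ c i)
    (hj : c j ≠ c i) (hjx : σ j = x + 1) (hx : c (σ.symm x) = c i) (hxi : x ≠ σ i) :
    ssgUtil (cycleGraph (m + 3)) c σ j < ssgUtil (cycleGraph (m + 3)) c (ssgSwap σ i j) j := by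
  have hsame : ∀ v, (cycleGraph (m + 3)).Adj (σ i) v → c (σ.symm v) = c j :=
    fun v hv => Fin.eq_of_ne_of_ne (hlonely v hv) hj
  have hjx' : x = σ j - 1 := eq_sub_of_add_eq hjx.symm
  have hadjx : (cycleGraph (m + 3)).Adj (σ j) x := cycleGraph_adj_iff.2 (.inl hjx')
  have hnext : σ i + 1 ≠ σ j := fun h => hxi (add_right_cancel (h.trans hjx)).symm
  rw [ssgSwap_comm]
  by_cases hprev : σ j = σ i - 1
  · -- both old neighbours of `j`, namely `x` and `σ i`, have the colour of `i`
    have hold : ¬ 0 < ssgUtil (cycleGraph (m + 3)) c σ j := by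
      rw [ssgUtil_pos_iff]
      rintro ⟨v, hv, hcv⟩
      rcases cycleGraph_adj_iff.1 hv with rfl | rfl
      · exact hj (hcv.symm.trans (hjx' ▸ hx))
      · rw [hprev, sub_add_cancel, Equiv.symm_apply_apply] at hcv
        exact hj hcv.symm
    refine (not_lt.1 hold).trans_lt (ssgUtil_ssgSwap_pos (v := σ i + 1)
      (cycleGraph_adj_iff.2 (.inr rfl)) (hprev ▸ Fin.add_one_ne_sub_one _) ?_)
    exact hsame _ (cycleGraph_adj_iff.2 (.inr rfl))
  · rw [ssgUtil_ssgSwap_eq_one (v := σ i + 1) (cycleGraph_adj_iff.2 (.inr rfl))]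
    · exact ssgUtil_lt_one hadjx (hx.trans_ne hj.symm)
    · intro w hw
      refine ⟨?_, hsame w hw⟩
      rcases cycleGraph_adj_iff.1 hw with rfl | rfl
      · exact Ne.symm hprev
      · exact hnext

theorem exists_ssgProfitable_of_not_ssgUtil_pos (hi : ¬ 0 < ssgUtil (cycleGraph (m + 3)) c σ i)
    {i' : A} (hi' : i' ≠ i) (hci' : c i' = c i) :
    ∃ j, ssgProfitable (cycleGraph (m + 3)) c σ i j := by
  have hlonely : ∀ v, (cycleGraph (m + 3)).Adj (σ i) v → c (σ.symm v) ≠ c i :=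
    fun v hv hc => hi (ssgUtil_pos_iff.2 ⟨v, hv, hc⟩)
  -- `x` is where a run of `i`'s colour, started at `i'` and avoiding `i`, ends
  obtain ⟨x, ⟨hx, hxi⟩, hx1⟩ := Fin.exists_and_not_add_one
    (P := fun v => c (σ.symm v) = c i ∧ v ≠ σ i) (x := σ i') (y := σ i)
    ⟨by simpa using hci', σ.injective.ne hi'⟩ (by simp)
  have hx1i : x + 1 ≠ σ i := fun h =>
    hlonely _ (cycleGraph_adj_iff.2 (.inl rfl)) (by rwa [← eq_sub_of_add_eq h])
  have hj : c (σ.symm (x + 1)) ≠ c i := fun h => hx1 ⟨h, hx1i⟩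
  refine ⟨σ.symm (x + 1), Ne.symm hj, ?_, ?_⟩
  · exact (not_lt.1 hi).trans_lt (ssgUtil_ssgSwap_pos
      (cycleGraph_adj_iff.2 (.inl (by simp))) hxi hx)
  · exact ssgUtil_lt_ssgUtil_ssgSwap_of_lonely hlonely hj (by simp) hx hxi

end Cycle

theorem stmt14 (n o b : ℕ) (hn : 3 ≤ n)
    (c : Fin n → Fin 2)
    (ho : o = (Finset.univ.filter (fun i : Fin n => c i = 0)).card)
    (hb : b = (Finset.univ.filter (fun i : Fin n => c i = 1)).card)
    (ho2 : 2 ≤ o) (hb2 : 2 ≤ b)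
    (σ : Fin n ≃ Fin n) (heq : ssgEquilibrium (SimpleGraph.cycleGraph n) c σ) :
    ∀ i : Fin n, 0 < ssgUtil (SimpleGraph.cycleGraph n) c σ i := by
  obtain ⟨m, rfl⟩ : ∃ m, n = m + 3 := ⟨n - 3, by omega⟩
  intro i
  by_contra hi
  have hcount : 2 ≤ #{i' | c i' = c i} := by
    obtain h | h : c i = 0 ∨ c i = 1 := by omega
    · rwa [h, ← ho]
    · rwa [h, ← hb]
  obtain ⟨i', hci', hi'⟩ := exists_mem_ne hcount i
  obtain ⟨j, hij⟩ := exists_ssgProfitable_of_not_ssgUtil_pos hi hi' (mem_filter.1 hci').2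
  exact heq i j hij
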